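/- Let n ≥ 1, h > 0, and ħ = h/(2π). Define H : ℂⁿ → ℝ by H(z) = (1/2)‖z‖². Then the set of E ∈ ℝ such that the level set H⁻¹(E) is nonempty, the Fréchet derivative of H is nonzero at every point of H⁻¹(E), and hn/2 − 2πE ∈ hℤ, is exactly {ħ(N + n/2) : N ∈ ℤ, 2N > −n}. -/

import Mathlib

/-! The fibre `H⁻¹(E)` is the sphere of radius `√(2E)`: it is nonempty iff `E ≥ 0`, and it avoids
the only critical point `0` of `H` iff `E ≠ 0`. So the regularity conditions say exactly `E > 0`,
and writing the integer as `m = -N` turns `hn/2 - 2πE = hm` into `E = ħ(N + n/2)`, whose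
positivity is `2N > -n`. -/

open Real

/-- The Hamiltonian of the `n`-dimensional harmonic oscillator on `ℂⁿ`:
`H(z) = (1/2)‖z‖²`. -/
noncomputable def Hosc (n : ℕ) (z : EuclideanSpace ℂ (Fin n)) : ℝ :=
  (1 / 2) * ‖z‖ ^ 2

def IsNonemptyRegularValue {F : Type*} [NormedAddCommGroup F] [NormedSpace ℝ F]
    (f : F → ℝ) (E : ℝ) : Prop :=
  (f ⁻¹' {E}).Nonempty ∧ ∀ z ∈ f ⁻¹' {E}, fderiv ℝ f z ≠ 0

section HalfNormSq

variable {F : Type*} [NormedAddCommGroup F] [InnerProductSpace ℝ F]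

theorem hasFDerivAt_half_norm_sq (z : F) :
    HasFDerivAt (fun x : F => (1 / 2 : ℝ) * ‖x‖ ^ 2) (innerSL ℝ z) z :=
  ((hasStrictFDerivAt_norm_sq z).hasFDerivAt.const_mul (1 / 2 : ℝ)).congr_fderiv <| by
    ext y
    simp only [smul_apply, two_smul, add_apply, innerSL_apply_apply]
    ring

theorem fderiv_half_norm_sq_eq_zero_iff {z : F} :
    fderiv ℝ (fun x : F => (1 / 2 : ℝ) * ‖x‖ ^ 2) z = 0 ↔ z = 0 := by
  rw [(hasFDerivAt_half_norm_sq z).fderiv, ← norm_eq_zero, innerSL_apply_norm, norm_eq_zero]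

theorem isNonemptyRegularValue_half_norm_sq_iff [Nontrivial F] {E : ℝ} :
    IsNonemptyRegularValue (fun x : F => (1 / 2 : ℝ) * ‖x‖ ^ 2) E ↔ 0 < E := by
  simp only [IsNonemptyRegularValue, Set.mem_preimage, Set.mem_singleton_iff, ne_eq,
    fderiv_half_norm_sq_eq_zero_iff]
  constructor
  · rintro ⟨⟨z, rfl⟩, hreg⟩
    have hz : z ≠ 0 := hreg z rfl
    positivity
  · intro hE
    obtain ⟨z, hz⟩ := exists_norm_eq F (Real.sqrt_nonneg (2 * E))
    have hzE : (1 / 2 : ℝ) * ‖z‖ ^ 2 = E := by rw [hz, Real.sq_sqrt (by positivity)]; ring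
    refine ⟨⟨z, hzE⟩, ?_⟩
    rintro z hz0 rfl
    simp only [norm_zero] at hz0
    linarith

end HalfNormSq

theorem momentum_eq_mul_int_iff (h n E : ℝ) (m : ℤ) :
    h * n / 2 - 2 * π * E = h * m ↔ E = h / (2 * π) * (-m + n / 2) := by
  have hπ : 2 * π ≠ 0 := by positivity
  constructor <;> intro hE
  · field_simp; linarith
  · rw [hE]; field_simp; ring

theorem pos_and_exists_momentum_eq_mul_int_iff {h hbar : ℝ} (hh : 0 < h)
    (hbar_def : hbar = h / (2 * π)) (n : ℕ) (E : ℝ) :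
    (0 < E ∧ ∃ m : ℤ, h * n / 2 - 2 * π * E = h * m) ↔
      ∃ N : ℤ, E = hbar * (N + n / 2) ∧ 2 * N > -(n : ℤ) := by
  have hbar_pos : 0 < hbar := by rw [hbar_def]; positivity
  simp only [momentum_eq_mul_int_iff, ← hbar_def]
  constructor
  · rintro ⟨hE, m, rfl⟩
    refine ⟨-m, by push_cast; rfl, ?_⟩
    have : (0 : ℝ) < -m + n / 2 := pos_of_mul_pos_right hE hbar_pos.le
    have : (-n : ℝ) < 2 * (-m : ℤ) := by push_cast; linarith
    exact_mod_cast this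
  · rintro ⟨N, rfl, hN⟩
    have hN' : (-n : ℝ) < 2 * N := by exact_mod_cast hN
    have : (0 : ℝ) < N + n / 2 := by linarith
    exact ⟨by positivity, -N, by push_cast; ring⟩

/-- The quantized energy levels of the `n`-dimensional harmonic oscillator
`H(z) = (1/2)‖z‖²` — the nonempty regular values `E` of `H` for which the
corresponding shifted momentum value `hn/2 − 2πE` lies in `hℤ` — are exactly
`E = ħ(N + n/2)` with `N ∈ ℤ`, `2N > −n`, where `ħ = h/(2π)`. -/
theorem quantized_energy_levels_harmonic_oscillator (n : ℕ) (hn : 1 ≤ n)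
    (h : ℝ) (hh : 0 < h) (hbar : ℝ) (hbar_def : hbar = h / (2 * π)) :
    {E : ℝ | (Hosc n ⁻¹' {E}).Nonempty ∧
        (∀ z ∈ Hosc n ⁻¹' {E}, fderiv ℝ (Hosc n) z ≠ 0) ∧
        ∃ m : ℤ, h * n / 2 - 2 * π * E = h * m}
      = {E : ℝ | ∃ N : ℤ, E = hbar * (N + n / 2) ∧ 2 * N > -(n : ℤ)} := by
  have : NeZero n := NeZero.of_pos hn
  ext E
  rw [Set.mem_ofPred_eq, Set.mem_ofPred_eq, ← and_assoc]
  change IsNonemptyRegularValue (fun z : EuclideanSpace ℂ (Fin n) => (1 / 2 : ℝ) * ‖z‖ ^ 2) E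
      ∧ _ ↔ _
  rw [isNonemptyRegularValue_half_norm_sq_iff]
  exact pos_and_exists_momentum_eq_mul_int_iff hh hbar_def n E
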